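/- Let A be SPD and A_ℓ = A + Σ_{k=1}^ℓ E_k with each E_k symmetric satisfying E_k = P_k E_k P_k for orthogonal projectors P_k. If Σ_k ‖E_k‖₂ ‖P_k A^{-1} P_k‖₂ ≤ μ < 1, then A_ℓ is SPD and the condition number of A_ℓ^{-1/2} A A_ℓ^{-1/2} is at most (1+μ)/(1−μ). -/

import Mathlib

/-!
For every `x`, compressing `E_k = P_k E_k P_k` gives
`|xᵀ E_k x| ≤ ‖E_k‖ ‖P_k x‖² ≤ ‖E_k‖ ‖P_k A⁻¹ P_k‖ xᵀ A x`, where the last step is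
`‖B x‖² ≤ ‖B A^{-1/2}‖² ‖A^{1/2} x‖²` with `‖B A^{-1/2}‖² = ‖B A⁻¹ Bᵀ‖`.  Summing, the perturbation
`∑ E_k` is bounded by `μ` in the energy norm of `A`, so `A_ℓ` is positive definite.  An eigenvalue
`λ` of `S A S` with unit eigenvector `v` equals `xᵀ A x` for `x = S v`, while `xᵀ A_ℓ x = vᵀ v = 1`;
hence `(1 - μ) λ ≤ 1 ≤ (1 + μ) λ`, and any two eigenvalues have ratio at most `(1 + μ)/(1 - μ)`.
-/

open Matrix

/-- The spectral norm (ℓ²-operator norm) of a real square matrix. -/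
noncomputable def spectralNormL2 (n : ℕ) (M : Matrix (Fin n) (Fin n) ℝ) : ℝ :=
  ‖LinearMap.toContinuousLinearMap (Matrix.toEuclideanLin M)‖

open scoped Matrix.Norms.L2Operator

namespace Matrix

variable {ι m : Type*} [Fintype ι] [Fintype m]

lemma dotProduct_transpose_mul_mul_mulVec {R : Type*} [CommSemiring R] (M : Matrix m m R)
    (B : Matrix m ι R) (v : ι → R) :
    v ⬝ᵥ ((Bᵀ * M * B) *ᵥ v) = (B *ᵥ v) ⬝ᵥ (M *ᵥ (B *ᵥ v)) := by
  rw [← mulVec_mulVec, ← mulVec_mulVec, dotProduct_mulVec, vecMul_transpose]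

lemma dotProduct_self_eq_norm_sq (v : ι → ℝ) :
    v ⬝ᵥ v = ‖(EuclideanSpace.equiv ι ℝ).symm v‖ ^ 2 := by
  rw [← real_inner_self_eq_norm_sq, EuclideanSpace.inner_eq_star_dotProduct]
  simp

lemma abs_dotProduct_sum_mulVec_le {R κ : Type*} [CommRing R] [LinearOrder R] [IsOrderedRing R]
    (s : Finset κ) (E : κ → Matrix ι ι R) (c : κ → R) (q : R) (x : ι → R)
    (h : ∀ k ∈ s, |x ⬝ᵥ (E k *ᵥ x)| ≤ c k * q) :
    |x ⬝ᵥ ((∑ k ∈ s, E k) *ᵥ x)| ≤ (∑ k ∈ s, c k) * q := by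
  rw [sum_mulVec, dotProduct_sum, Finset.sum_mul]
  exact (Finset.abs_sum_le_sum_abs _ _).trans (Finset.sum_le_sum h)

lemma PosDef.add_of_abs_dotProduct_mulVec_le {A E : Matrix ι ι ℝ} {μ : ℝ} (hA : A.PosDef)
    (hE : E.IsHermitian) (hμ : μ < 1)
    (h : ∀ x, |x ⬝ᵥ (E *ᵥ x)| ≤ μ * (x ⬝ᵥ (A *ᵥ x))) : (A + E).PosDef := by
  refine .of_dotProduct_mulVec_pos (hA.isHermitian.add hE) fun x hx => ?_
  have hAx := hA.dotProduct_mulVec_pos hx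
  rw [star_trivial] at hAx ⊢
  rw [add_mulVec, dotProduct_add]
  nlinarith [(abs_le.1 (h x)).1]

variable [DecidableEq ι]

lemma mulVec_dotProduct_mulVec_le (M : Matrix m ι ℝ) (v : ι → ℝ) :
    (M *ᵥ v) ⬝ᵥ (M *ᵥ v) ≤ ‖M‖ ^ 2 * (v ⬝ᵥ v) := by
  rw [dotProduct_self_eq_norm_sq, dotProduct_self_eq_norm_sq, ← mul_pow]
  exact pow_le_pow_left₀ (norm_nonneg _) (M.l2_opNorm_mulVec _) 2

lemma abs_dotProduct_mulVec_le (M : Matrix ι ι ℝ) (v : ι → ℝ) :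
    |v ⬝ᵥ (M *ᵥ v)| ≤ ‖M‖ * (v ⬝ᵥ v) := by
  set w := (EuclideanSpace.equiv ι ℝ).symm v
  have h := abs_real_inner_le_norm ((EuclideanSpace.equiv ι ℝ).symm (M *ᵥ v)) w
  rw [EuclideanSpace.inner_eq_star_dotProduct] at h
  calc |v ⬝ᵥ (M *ᵥ v)| ≤ ‖(EuclideanSpace.equiv ι ℝ).symm (M *ᵥ v)‖ * ‖w‖ := by
        simpa [w] using h
    _ ≤ ‖M‖ * ‖w‖ * ‖w‖ := by gcongr; exact M.l2_opNorm_mulVec _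
    _ = ‖M‖ * (v ⬝ᵥ v) := by rw [dotProduct_self_eq_norm_sq]; ring

open scoped MatrixOrder in
lemma PosDef.exists_isSymm_mul_self_eq {A : Matrix ι ι ℝ} (hA : A.PosDef) :
    ∃ Q : Matrix ι ι ℝ, Qᵀ = Q ∧ Q * Q = A ∧ IsUnit Q := by
  have hA0 : 0 ≤ A := hA.posSemidef.nonneg
  refine ⟨CFC.sqrt A, ?_, CFC.sqrt_mul_sqrt_self A hA0, (CFC.isUnit_sqrt_iff A hA0).2 hA.isUnit⟩
  exact isHermitian_iff_isSymm.1 (CFC.sqrt_nonneg A).posSemidef.isHermitian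

lemma PosDef.mulVec_dotProduct_mulVec_le [DecidableEq m] {A : Matrix ι ι ℝ} (hA : A.PosDef)
    (B : Matrix m ι ℝ) (x : ι → ℝ) :
    (B *ᵥ x) ⬝ᵥ (B *ᵥ x) ≤ ‖B * A⁻¹ * Bᵀ‖ * (x ⬝ᵥ (A *ᵥ x)) := by
  obtain ⟨Q, hQt, rfl, hQ⟩ := hA.exists_isSymm_mul_self_eq
  set C := B * Q⁻¹
  have hnorm : ‖B * (Q * Q)⁻¹ * Bᵀ‖ = ‖C‖ ^ 2 := by
    have h := l2_opNorm_conjTranspose_mul_self Cᴴ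
    rw [conjTranspose_conjTranspose, l2_opNorm_conjTranspose,
      conjTranspose_eq_transpose_of_trivial] at h
    rw [sq, ← h, transpose_mul, transpose_nonsing_inv, hQt, mul_inv_rev]
    simp only [C, Matrix.mul_assoc]
  have hBx : B *ᵥ x = C *ᵥ (Q *ᵥ x) := by
    rw [mulVec_mulVec, Matrix.mul_assoc, nonsing_inv_mul _ ((isUnit_iff_isUnit_det Q).1 hQ),
      Matrix.mul_one]
  have hQx : x ⬝ᵥ ((Q * Q) *ᵥ x) = (Q *ᵥ x) ⬝ᵥ (Q *ᵥ x) := by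
    simpa [hQt] using dotProduct_transpose_mul_mul_mulVec 1 Q x
  rw [hnorm, hBx, hQx]
  exact C.mulVec_dotProduct_mulVec_le _

lemma abs_dotProduct_transpose_mul_mul_mulVec_le [DecidableEq m] {A : Matrix ι ι ℝ}
    (hA : A.PosDef) (F : Matrix m m ℝ) (B : Matrix m ι ℝ) (x : ι → ℝ) :
    |x ⬝ᵥ ((Bᵀ * F * B) *ᵥ x)| ≤ ‖F‖ * ‖B * A⁻¹ * Bᵀ‖ * (x ⬝ᵥ (A *ᵥ x)) := by
  rw [dotProduct_transpose_mul_mul_mulVec, _root_.mul_assoc ‖F‖]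
  exact (F.abs_dotProduct_mulVec_le _).trans
    (mul_le_mul_of_nonneg_left (hA.mulVec_dotProduct_mulVec_le B x) (norm_nonneg F))

lemma mul_mul_eq_one_of_mul_self_eq_inv {R : Type*} [CommRing R] {S B : Matrix ι ι R} (hB : IsUnit B)
    (hS : S * S = B⁻¹) : S * B * S = 1 :=
  mul_eq_one_comm.1 <| by
    rw [← Matrix.mul_assoc, hS, nonsing_inv_mul B ((isUnit_iff_isUnit_det B).1 hB)]

lemma IsHermitian.exists_eigenvalues_eq_dotProduct_mulVec {S A B : Matrix ι ι ℝ}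
    (hS : S.IsHermitian) (hSBS : S * B * S = 1) (h : (S * A * S).IsHermitian) (i : ι) :
    ∃ x, x ⬝ᵥ (B *ᵥ x) = 1 ∧ x ⬝ᵥ (A *ᵥ x) = h.eigenvalues i := by
  have hSt : Sᵀ = S := isHermitian_iff_isSymm.1 hS
  refine ⟨S *ᵥ h.eigenvectorBasis i, ?_, ?_⟩
  · rw [← dotProduct_transpose_mul_mul_mulVec, hSt, hSBS, one_mulVec, dotProduct_self_eq_norm_sq]
    simp [h.eigenvectorBasis.orthonormal.1 i]
  · rw [← dotProduct_transpose_mul_mul_mulVec, hSt, h.eigenvalues_eq]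
    simp

end Matrix

theorem preconditioned_condition_number_bound_general (n ℓ : ℕ) (μ : ℝ)
    (A : Matrix (Fin n) (Fin n) ℝ) (E P : Fin ℓ → Matrix (Fin n) (Fin n) ℝ)
    (hA : A.PosDef)
    (hEsymm : ∀ k, (E k).IsSymm)
    (hPsymm : ∀ k, (P k).IsSymm)
    (hEP : ∀ k, E k = P k * E k * P k)
    (hsum : ∑ k, spectralNormL2 n (E k) * spectralNormL2 n (P k * A⁻¹ * P k) ≤ μ)
    (hμ : μ < 1) :
    (A + ∑ k, E k).PosDef ∧
    ∀ S : Matrix (Fin n) (Fin n) ℝ, S.PosDef → S * S = (A + ∑ k, E k)⁻¹ →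
      ∀ (h : (S * A * S).IsHermitian) (i j : Fin n),
        h.eigenvalues i ≤ ((1 + μ) / (1 - μ)) * h.eigenvalues j := by
  have hquad : ∀ x, |x ⬝ᵥ ((∑ k, E k) *ᵥ x)| ≤ μ * (x ⬝ᵥ (A *ᵥ x)) := fun x => by
    have hAx : 0 ≤ x ⬝ᵥ (A *ᵥ x) := by simpa using hA.posSemidef.dotProduct_mulVec_nonneg x
    refine (abs_dotProduct_sum_mulVec_le _ E _ _ x fun k _ => ?_).trans
      (mul_le_mul_of_nonneg_right hsum hAx)
    have hk := abs_dotProduct_transpose_mul_mul_mulVec_le hA (E k) (P k) x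
    rwa [(hPsymm k).eq, ← hEP k] at hk
  have hAℓ : (A + ∑ k, E k).PosDef := hA.add_of_abs_dotProduct_mulVec_le
    (isSelfAdjoint_sum _ fun k _ => isHermitian_iff_isSymm.2 (hEsymm k)) hμ hquad
  refine ⟨hAℓ, fun S hS hS2 h i j => ?_⟩
  have hSAS := mul_mul_eq_one_of_mul_self_eq_inv hAℓ.isUnit hS2
  obtain ⟨x, hx1, hxi⟩ := hS.isHermitian.exists_eigenvalues_eq_dotProduct_mulVec hSAS h i
  obtain ⟨y, hy1, hyj⟩ := hS.isHermitian.exists_eigenvalues_eq_dotProduct_mulVec hSAS h j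
  rw [add_mulVec, dotProduct_add] at hx1 hy1
  rw [← hxi, ← hyj, div_mul_eq_mul_div, le_div_iff₀ (sub_pos.2 hμ)]
  linarith [(abs_le.1 (hquad x)).1, (abs_le.1 (hquad y)).2]

/-- Let `A` be SPD and `A_ℓ = A + ∑_{k=1}^ℓ E_k` with each `E_k` symmetric and
`E_k = P_k E_k P_k` for orthogonal projectors `P_k`.  If
`∑_k ‖E_k‖₂ ‖P_k A⁻¹ P_k‖₂ ≤ μ < 1`, then `A_ℓ` is SPD and the condition number of
`A_ℓ^{-1/2} A A_ℓ^{-1/2}` is at most `(1+μ)/(1−μ)`: for any SPD `S` with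
`S * S = A_ℓ⁻¹` (so `S = A_ℓ^{-1/2}`), any two eigenvalues of the symmetric matrix
`S * A * S` have ratio at most `(1+μ)/(1−μ)`. -/
theorem preconditioned_condition_number_bound (n ℓ : ℕ) (μ : ℝ)
    (A : Matrix (Fin n) (Fin n) ℝ) (E P : Fin ℓ → Matrix (Fin n) (Fin n) ℝ)
    (hA : A.PosDef)
    (hEsymm : ∀ k, (E k).IsSymm)
    (hPsymm : ∀ k, (P k).IsSymm)
    (hPidem : ∀ k, P k * P k = P k)
    (hEP : ∀ k, E k = P k * E k * P k)
    (hsum : ∑ k, spectralNormL2 n (E k) * spectralNormL2 n (P k * A⁻¹ * P k) ≤ μ)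
    (hμ : μ < 1) :
    (A + ∑ k, E k).PosDef ∧
    ∀ S : Matrix (Fin n) (Fin n) ℝ, S.PosDef → S * S = (A + ∑ k, E k)⁻¹ →
      ∀ (h : (S * A * S).IsHermitian) (i j : Fin n),
        h.eigenvalues i ≤ ((1 + μ) / (1 - μ)) * h.eigenvalues j :=
  preconditioned_condition_number_bound_general n ℓ μ A E P hA hEsymm hPsymm hEP hsum hμ
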